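/- Let f : [0,a] → [0,b] be a C¹ function with f(0) = 0, f' > 0 on [0,a), and f(t)/t > f'(t) for t ∈ (0,a). Let ‖·‖ be a norm on ℝⁿ differentiable away from 0 and define φ(x) = (f(‖x‖)/‖x‖)·x for x ≠ 0. Then for all x ≠ 0 with ‖x‖ < a and all h ∈ ℝⁿ, ‖Dφ(x)h‖ ≥ f'(‖x‖)·‖h‖. -/

import Mathlib

open RealInnerProductSpace Set Topology Filter

/-- Lower bound `‖Dφ(x)h‖ ≥ f'(‖x‖)·‖h‖` for `φ(x) = (f(‖x‖)/‖x‖)·x`, where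
`Dφ(x)h = (f'(‖x‖) − f(‖x‖)/‖x‖)·⟪∇N(x),h⟫·(x/‖x‖) + (f(‖x‖)/‖x‖)·h`. -/
theorem norm_Dphi_ge {n : ℕ} (N : EuclideanSpace ℝ (Fin n) → ℝ)
    (hN0 : ∀ x, N x = 0 ↔ x = 0)
    (hNh : ∀ (a : ℝ) x, N (a • x) = |a| * N x)
    (hNt : ∀ x y, N (x + y) ≤ N x + N y)
    (hNd : ∀ x, x ≠ 0 → DifferentiableAt ℝ N x)
    (a b : ℝ) (ha : 0 < a)
    (f : ℝ → ℝ) (hf : ContDiffOn ℝ 1 f (Icc 0 a))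
    (hf0 : f 0 = 0)
    (hrange : ∀ t ∈ Icc 0 a, f t ∈ Icc 0 b)
    (hf' : ∀ t ∈ Ico 0 a, 0 < deriv f t)
    (hslope : ∀ t ∈ Ioo 0 a, deriv f t < f t / t)
    (x h : EuclideanSpace ℝ (Fin n)) (hx : x ≠ 0) (hxa : N x < a) :
    deriv f (N x) * N h ≤
      N ((deriv f (N x) - f (N x) / N x) • (⟪gradient N x, h⟫ • ((N x)⁻¹ • x))
          + (f (N x) / N x) • h) := by
  have hN0' : N 0 = 0 := (hN0 0).mpr rfl
  have hNneg : ∀ y, 0 ≤ N y := by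
    intro y
    have h1 := hNt y (-y)
    have h2 : N (-y) = N y := by
      have := hNh (-1) y; simpa using this
    simp [hN0', h2] at h1
    linarith
  have ht : 0 < N x := lt_of_le_of_ne (hNneg x) (fun e => hx ((hN0 x).mp e.symm))
  set t := N x with htdef
  -- gradient applied = fderiv applied
  have hgrad : ∀ v, (⟪gradient N x, v⟫ : ℝ) = fderiv ℝ N x v := by
    intro v
    rw [gradient, InnerProductSpace.toDual_symm_apply]
  -- derivative along a line
  have hline : ∀ v : EuclideanSpace ℝ (Fin n),
      HasDerivAt (fun s : ℝ => N (x + s • v)) (fderiv ℝ N x v) 0 := by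
    intro v
    have h1 : HasFDerivAt N (fderiv ℝ N x) x := (hNd x hx).hasFDerivAt
    have h2 : HasDerivAt (fun s : ℝ => x + s • v) v 0 := by
      simpa using ((hasDerivAt_id (0 : ℝ)).smul_const v).const_add x
    have h1' : HasFDerivAt N (fderiv ℝ N x) (x + (0 : ℝ) • v) := by simpa using h1
    exact h1'.comp_hasDerivAt 0 h2
  -- dual bound: fderiv N x v ≤ N v
  have hdual : ∀ v, fderiv ℝ N x v ≤ N v := by
    intro v
    have hD := hline v
    have hslopeD := hasDerivAt_iff_tendsto_slope.mp hD
    have hsub : 𝓝[>] (0 : ℝ) ≤ 𝓝[≠] (0 : ℝ) :=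
      nhdsWithin_mono _ (fun s hs => ne_of_gt hs)
    refine le_of_tendsto (hslopeD.mono_left hsub) ?_
    filter_upwards [self_mem_nhdsWithin] with s hs
    have hs' : (0 : ℝ) < s := hs
    have : N (x + s • v) ≤ N x + s * N v := by
      have := hNt x (s • v)
      rwa [hNh s v, abs_of_pos hs'] at this
    simp only [slope_def_field, zero_smul, add_zero, sub_zero]
    rw [div_le_iff₀ hs']
    nlinarith
  have habs : ∀ v, |fderiv ℝ N x v| ≤ N v := by
    intro v
    rw [abs_le]
    constructor
    · have := hdual (-v)
      have hneg : N (-v) = N v := by have := hNh (-1) v; simpa using this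
      rw [map_neg, hneg] at this; linarith
    · exact hdual v
  -- fderiv N x x = N x
  have hEuler : fderiv ℝ N x x = t := by
    have hD := hline x
    have heq : (fun s : ℝ => N (x + s • x)) =ᶠ[nhds (0 : ℝ)] fun s => (1 + s) * t := by
      filter_upwards [Metric.ball_mem_nhds (0 : ℝ) one_pos] with s hs
      have hs1 : |s| < 1 := by simpa [Real.dist_eq] using hs
      have : x + s • x = (1 + s) • x := by module
      rw [this, hNh, abs_of_pos (by cases abs_lt.mp hs1; linarith)]
    have hD2 : HasDerivAt (fun s : ℝ => (1 + s) * t) t 0 := by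
      simpa using ((hasDerivAt_id (0 : ℝ)).const_add 1).mul_const t
    exact (hD.congr_of_eventuallyEq heq.symm).unique hD2
  -- f t > 0
  have hfmono : StrictMonoOn f (Icc 0 a) := by
    refine strictMonoOn_of_deriv_pos (convex_Icc 0 a) (hf.continuousOn) ?_
    intro s hs
    rw [interior_Icc] at hs
    exact hf' s ⟨le_of_lt hs.1, hs.2⟩
  have hft : 0 < f t := by
    have := hfmono ⟨le_refl 0, ha.le⟩ ⟨ht.le, hxa.le⟩ ht
    rwa [hf0] at this
  set β := f t / t with hβdef
  have hβ : 0 < β := div_pos hft ht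
  set d := deriv f t with hddef
  have hd0 : 0 < d := hf' t ⟨ht.le, hxa⟩
  have hdβ : d < β := hslope t ⟨ht, hxa⟩
  set c := (⟪gradient N x, h⟫ : ℝ) with hcdef
  have hc : |c| ≤ N h := by rw [hcdef, hgrad]; exact habs h
  -- rewrite the first summand
  have hw : (d - β) • (c • (t⁻¹ • x)) = ((d - β) * c * t⁻¹) • x := by
    simp [smul_smul, mul_assoc]
  have hNw : N (((d - β) * c * t⁻¹) • x) = (β - d) * |c| := by
    rw [hNh, abs_mul, abs_mul, abs_of_pos (inv_pos.mpr ht)]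
    rw [abs_of_neg (by linarith : d - β < 0)]
    field_simp
    rw [← htdef]; ring
  -- reverse triangle
  have htri : N (β • h) - N (((d - β) * c * t⁻¹) • x)
      ≤ N (((d - β) * c * t⁻¹) • x + β • h) := by
    have h1 := hNt (((d - β) * c * t⁻¹) • x + β • h) (-(((d - β) * c * t⁻¹) • x))
    have h2 : N (-(((d - β) * c * t⁻¹) • x)) = N (((d - β) * c * t⁻¹) • x) := by
      have := hNh (-1) (((d - β) * c * t⁻¹) • x); simpa using this
    have h3 : (((d - β) * c * t⁻¹) • x + β • h) + -(((d - β) * c * t⁻¹) • x) = β • h := by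
      module
    rw [h3, h2] at h1
    linarith
  have hNβh : N (β • h) = β * N h := by rw [hNh, abs_of_pos hβ]
  rw [hw]
  calc d * N h ≤ β * N h - (β - d) * |c| := by nlinarith
    _ = N (β • h) - N (((d - β) * c * t⁻¹) • x) := by rw [hNβh, hNw]
    _ ≤ _ := htri
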